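/- arXiv:1004.0036 — 5 statements merged into one kernel-verified Lean document; each statement's English description precedes it below -/
import Mathlib

section
/- Let f : [0, ∞) → [0, ∞) with f ∈ L¹(0, ∞) ∩ L^∞(0, ∞), f differentiable, and f' ∈ L²(0, ∞). Then f(t) → 0 as t → ∞. -/
open Filter MeasureTheory Set

/-!
A function in `L¹ ∩ L^∞` lies in `L²`. If `f, f' ∈ L²(a, ∞)`, then `f ^ 2` and
`(f ^ 2)' = 2 f f'` are integrable on `(a, ∞)`, so `f ^ 2` has a limit at infinity,
which integrability forces to be `0`.
-/

theorem MeasureTheory.Integrable.memLp_two_of_ae_abs_le {α : Type*} [MeasurableSpace α]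
    {μ : Measure α} {f : α → ℝ} (hf : Integrable f μ) {M : ℝ} (hM : ∀ᵐ x ∂μ, |f x| ≤ M) :
    MemLp f 2 μ := by
  rw [memLp_two_iff_integrable_sq hf.aestronglyMeasurable]
  simpa only [sq] using hf.bdd_mul hf.aestronglyMeasurable hM

theorem tendsto_zero_of_hasDerivAt_of_memLp_two_Ioi {f f' : ℝ → ℝ} {a : ℝ}
    (hderiv : ∀ x ∈ Ioi a, HasDerivAt f (f' x) x)
    (hf : MemLp f 2 (volume.restrict (Ioi a))) (hf' : MemLp f' 2 (volume.restrict (Ioi a))) :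
    Tendsto f atTop (nhds 0) := by
  have hsq : Tendsto (f * f) atTop (nhds 0) :=
    tendsto_zero_of_hasDerivAt_of_integrableOn_Ioi (fun x hx => (hderiv x hx).mul (hderiv x hx))
      ((hf'.integrable_mul hf).add (hf.integrable_mul hf')) (hf.integrable_mul hf)
  rw [tendsto_zero_iff_abs_tendsto_zero]
  simpa only [Function.comp_def, Pi.mul_apply, Real.sqrt_mul_self_eq_abs, Real.sqrt_zero]
    using hsq.sqrt

theorem stmt_8_general (f : ℝ → ℝ)
    (hL1 : IntegrableOn f (Set.Ioi 0))
    (hLinf : ∃ M : ℝ, ∀ t, 0 ≤ t → |f t| ≤ M)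
    (hdiff : Differentiable ℝ f)
    (hL2 : IntegrableOn (fun t => (deriv f t) ^ 2) (Set.Ioi 0)) :
    Tendsto f atTop (nhds 0) := by
  obtain ⟨M, hM⟩ := hLinf
  have hf : MemLp f 2 (volume.restrict (Ioi 0)) :=
    hL1.memLp_two_of_ae_abs_le <| (ae_restrict_iff' measurableSet_Ioi).2 <|
      Eventually.of_forall fun t ht => hM t ht.le
  have hf' : MemLp (deriv f) 2 (volume.restrict (Ioi 0)) :=
    (memLp_two_iff_integrable_sq (measurable_deriv f).aestronglyMeasurable).2 hL2
  exact tendsto_zero_of_hasDerivAt_of_memLp_two_Ioi (fun x _ => (hdiff x).hasDerivAt) hf hf'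

/-- Let f : [0,∞) → [0,∞) with f ∈ L¹(0,∞) ∩ L^∞(0,∞), f differentiable,
and f' ∈ L²(0,∞). Then f(t) → 0 as t → ∞. -/
theorem stmt_8 (f : ℝ → ℝ)
    (hnonneg : ∀ t, 0 ≤ t → 0 ≤ f t)
    (hL1 : IntegrableOn f (Set.Ioi 0))
    (hLinf : ∃ M : ℝ, ∀ t, 0 ≤ t → |f t| ≤ M)
    (hdiff : Differentiable ℝ f)
    (hL2 : IntegrableOn (fun t => (deriv f t) ^ 2) (Set.Ioi 0)) :
    Tendsto f atTop (nhds 0) :=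
  stmt_8_general f hL1 hLinf hdiff hL2
end

section
/- Let ρ : ℝ → (0, ∞) be smooth, θ ∈ (0, 1/2), and suppose ρ(x₁) ≥ A > 0 for some x₁ and ‖(ρ^{θ-1/2})'‖_{L²(ℝ)} ≤ B. Then for every x₀ with |x₁ - x₀| ≤ 2M, ρ(x₀) ≥ (A^{θ-1/2} + B (2M)^{1/2})^{2/(2θ-1)} > 0. -/
open MeasureTheory

set_option maxHeartbeats 1000000

/-- Let ρ : ℝ → (0,∞) be smooth, θ ∈ (0,1/2), ρ(x₁) ≥ A > 0 and
‖(ρ^{θ-1/2})'‖_{L²(ℝ)} ≤ B. Then for every x₀ with |x₁ - x₀| ≤ 2M,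
ρ(x₀) ≥ (A^{θ-1/2} + B(2M)^{1/2})^{2/(2θ-1)} > 0. -/
theorem stmt_15 (ρ : ℝ → ℝ) (θ A B M x₁ : ℝ)
    (hsmooth : ContDiff ℝ (⊤ : ℕ∞) ρ) (hpos : ∀ x : ℝ, 0 < ρ x)
    (hθ1 : 0 < θ) (hθ2 : θ < 1 / 2) (hA : 0 < A) (hB : 0 ≤ B) (hM : 0 < M)
    (hx₁ : A ≤ ρ x₁)
    (hint : Integrable (fun x => (deriv (fun y => ρ y ^ (θ - 1 / 2)) x) ^ 2))
    (hL2 : (∫ x : ℝ, (deriv (fun y => ρ y ^ (θ - 1 / 2)) x) ^ 2) ≤ B ^ 2) :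
    ∀ x₀ : ℝ, |x₁ - x₀| ≤ 2 * M →
      0 < (A ^ (θ - 1 / 2) + B * (2 * M) ^ ((1 : ℝ) / 2)) ^ (2 / (2 * θ - 1)) ∧
      (A ^ (θ - 1 / 2) + B * (2 * M) ^ ((1 : ℝ) / 2)) ^ (2 / (2 * θ - 1)) ≤ ρ x₀ := by
  intro x₀ h2M
  have hc : θ - 1 / 2 < 0 := by linarith
  set c : ℝ := θ - 1 / 2 with hcdef
  set g : ℝ → ℝ := fun y => ρ y ^ c with hgdef
  set f : ℝ → ℝ := deriv g with hfdef
  -- differentiability of g and continuity of f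
  have hρd : Differentiable ℝ ρ := hsmooth.differentiable (by simp)
  have hgd : ∀ x, HasDerivAt g (deriv ρ x * c * ρ x ^ (c - 1)) x := fun x =>
    (hρd x).hasDerivAt.rpow_const (Or.inl (hpos x).ne')
  have hfeq : f = fun x => deriv ρ x * c * ρ x ^ (c - 1) := funext fun x => (hgd x).deriv
  have hfc : Continuous f := by
    rw [hfeq]
    exact ((hsmooth.continuous_deriv (by simp)).mul continuous_const).mul
      (hsmooth.continuous.rpow_const fun x => Or.inl (hpos x).ne')
  -- FTC
  have hFTC : ∫ t in x₁..x₀, f t = g x₀ - g x₁ :=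
    intervalIntegral.integral_deriv_eq_sub (fun x _ => (hgd x).differentiableAt)
      (hfc.intervalIntegrable _ _)
  set a : ℝ := min x₁ x₀ with hadef
  set b : ℝ := max x₁ x₀ with hbdef
  have hab : a ≤ b := min_le_max
  have hLabs : b - a = |x₀ - x₁| := max_sub_min_eq_abs x₁ x₀
  have hL2M : b - a ≤ 2 * M := by rw [hLabs, abs_sub_comm]; exact h2M
  have hL0 : 0 ≤ b - a := sub_nonneg.mpr hab
  -- interval bound on |g x₀ - g x₁|
  set I : ℝ := ∫ x in Set.Ioc a b, |f x| with hIdef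
  have habs : |g x₀ - g x₁| ≤ I := by
    rcases le_total x₁ x₀ with h | h
    · have ha : a = x₁ := min_eq_left h
      have hb : b = x₀ := max_eq_right h
      rw [← hFTC, hIdef, ha, hb, ← intervalIntegral.integral_of_le h]
      exact intervalIntegral.abs_integral_le_integral_abs h
    · have ha : a = x₀ := min_eq_right h
      have hb : b = x₁ := max_eq_left h
      have : ∫ t in x₁..x₀, f t = -∫ t in x₀..x₁, f t := intervalIntegral.integral_symm _ _
      rw [← hFTC, this, abs_neg, hIdef, ha, hb, ← intervalIntegral.integral_of_le h]
      exact intervalIntegral.abs_integral_le_integral_abs h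
  -- Cauchy–Schwarz on Ioc a b
  set J : ℝ := ∫ x in Set.Ioc a b, f x ^ 2 with hJdef
  clear_value I J
  have hfI : IntegrableOn f (Set.Ioc a b) := hfc.integrableOn_Ioc
  have hfIabs : IntegrableOn (fun x => |f x|) (Set.Ioc a b) := hfI.abs
  have hfI2 : IntegrableOn (fun x => f x ^ 2) (Set.Ioc a b) := hint.integrableOn
  have hmeas : (volume (Set.Ioc a b)).toReal = b - a := by
    rw [Real.volume_Ioc, ENNReal.toReal_ofReal hL0]
  have hI0 : 0 ≤ I := by rw [hIdef]; exact integral_nonneg fun x => abs_nonneg _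
  have hJ0 : 0 ≤ J := by rw [hJdef]; exact integral_nonneg fun x => sq_nonneg _
  have hCS : I ^ 2 ≤ (b - a) * J := by
    have hquad : ∀ t : ℝ, 0 ≤ J * (t * t) + (-2 * I) * t + (b - a) := by
      intro t
      have h1 : 0 ≤ ∫ x in Set.Ioc a b, (t * |f x| - 1) ^ 2 :=
        integral_nonneg fun x => sq_nonneg _
      have h2 : ∫ x in Set.Ioc a b, (t * |f x| - 1) ^ 2
          = t ^ 2 * J - 2 * t * I + (b - a) := by
        have e1 : IntegrableOn (fun x => t ^ 2 * f x ^ 2) (Set.Ioc a b) :=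
          hfI2.const_mul _
        have e2 : IntegrableOn (fun x => 2 * t * |f x|) (Set.Ioc a b) :=
          hfIabs.const_mul _
        have expand : (fun x => (t * |f x| - 1) ^ 2)
            = fun x => (t ^ 2 * f x ^ 2 - 2 * t * |f x|) + 1 := by
          funext x
          have := sq_abs (f x)
          ring_nf
          nlinarith [sq_abs (f x)]
        have eA : IntegrableOn (fun x => t ^ 2 * f x ^ 2 - 2 * t * |f x|)
            (Set.Ioc a b) := e1.sub e2
        have eC : IntegrableOn (fun _ : ℝ => (1 : ℝ)) (Set.Ioc a b) :=
          integrableOn_const (by rw [Real.volume_Ioc]; exact ENNReal.ofReal_ne_top)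
        rw [expand, integral_add eA eC, integral_sub e1 e2, integral_const_mul,
          integral_const_mul, setIntegral_const, measureReal_def, hmeas]
        simp [hIdef, hJdef]
      nlinarith [h1, h2]
    have hdisc : discrim J (-2 * I) (b - a) ≤ 0 := discrim_le_zero hquad
    rw [discrim] at hdisc
    nlinarith [hdisc]
  -- J ≤ B ^ 2
  have hJB : J ≤ B ^ 2 := by
    refine le_trans ?_ hL2
    rw [hJdef]
    exact setIntegral_le_integral hint (Filter.Eventually.of_forall fun x => sq_nonneg _)
  -- I ≤ B * sqrt (2 M)
  have hIB : I ≤ B * (2 * M) ^ ((1 : ℝ) / 2) := by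
    have h1 : I ≤ Real.sqrt ((b - a) * J) := by
      rw [Real.le_sqrt hI0 (mul_nonneg hL0 hJ0)]
      exact hCS
    have h2 : Real.sqrt ((b - a) * J) ≤ Real.sqrt (2 * M * B ^ 2) := by
      apply Real.sqrt_le_sqrt
      exact mul_le_mul hL2M hJB hJ0 (by linarith)
    have h3 : Real.sqrt (2 * M * B ^ 2) = B * (2 * M) ^ ((1 : ℝ) / 2) := by
      rw [Real.sqrt_mul (by linarith : (0:ℝ) ≤ 2 * M), Real.sqrt_sq hB,
        Real.sqrt_eq_rpow]
      ring
    linarith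
  -- assemble: g x₀ ≤ A ^ c + B * (2 M) ^ (1/2)
  have hgx₁ : g x₁ ≤ A ^ c := Real.rpow_le_rpow_of_nonpos hA hx₁ hc.le
  have hgx₀ : g x₀ ≤ A ^ c + B * (2 * M) ^ ((1 : ℝ) / 2) := by
    have h' : g x₀ - g x₁ ≤ I := le_trans (le_abs_self _) habs
    linarith
  set D : ℝ := A ^ c + B * (2 * M) ^ ((1 : ℝ) / 2) with hDdef
  clear_value D
  have hD0 : 0 < D := by
    have h1 : 0 < A ^ c := Real.rpow_pos_of_pos hA c
    have h2 : 0 ≤ B * (2 * M) ^ ((1 : ℝ) / 2) :=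
      mul_nonneg hB (Real.rpow_nonneg (by linarith) _)
    linarith
  have hcne : c ≠ 0 := ne_of_lt hc
  have hexp : 2 / (2 * θ - 1) = 1 / c := by
    rw [hcdef]; field_simp
  constructor
  · exact Real.rpow_pos_of_pos hD0 _
  · rw [hexp]
    have hgpos : 0 < g x₀ := Real.rpow_pos_of_pos (hpos x₀) c
    have h1 : D ^ ((1 : ℝ) / c) ≤ (g x₀) ^ ((1 : ℝ) / c) :=
      Real.rpow_le_rpow_of_nonpos hgpos hgx₀
        (le_of_lt (div_neg_of_pos_of_neg one_pos hc))
    have h2 : (g x₀) ^ ((1 : ℝ) / c) = ρ x₀ := by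
      show (ρ x₀ ^ c) ^ ((1 : ℝ) / c) = ρ x₀
      rw [← Real.rpow_mul (hpos x₀).le, mul_one_div, div_self hcne, Real.rpow_one]
    rw [h2] at h1
    exact h1
end

section
/- Let γ > 1, α > 0 and let ρ, ρ̄ : ℝ → (0, ∞) be smooth. Then pointwise, ρ^{α-2} ρ_x (p(ρ)_x - (ρ/ρ̄) p(ρ̄)_x), with p(s)=s^γ, equals (4γ/(α+γ-1)²) [(ρ^{(α+γ-1)/2} - ρ̄^{(α+γ-1)/2})_x]² plus an exact x-derivative plus the terms -(8γ/(α+γ-1)²)(ρ̄^{(α+γ-1)/2})_{xx}(ρ^{(α+γ-1)/2} - ρ̄^{(α+γ-1)/2}) + (2γ/(α(α+γ-1)))[(ρ̄^{(α+γ-1)/2})_x ρ̄^{(γ-α-1)/2}]_x (ρ^α - ρ̄^α). Explicitly the exact derivative is ∂_x of (8γ/(α+γ-1)²)(ρ̄^{(α+γ-1)/2})_x(ρ^{(α+γ-1)/2} - ρ̄^{(α+γ-1)/2}) - (2γ/(α(α+γ-1)))(ρ̄^{(α+γ-1)/2})_x ρ̄^{(γ-α-1)/2} (ρ^α - ρ̄^α).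 -/
/-- Pointwise identity (3.19): for smooth positive ρ, ρ̄ : ℝ → (0,∞), γ > 1,
α > 0 and p(s) = s^γ,
ρ^{α-2} ρ_x (p(ρ)_x - (ρ/ρ̄) p(ρ̄)_x)
  = (4γ/(α+γ-1)²)[(ρ^{(α+γ-1)/2} - ρ̄^{(α+γ-1)/2})_x]² + (exact x-derivative)
    - (8γ/(α+γ-1)²)(ρ̄^{(α+γ-1)/2})_{xx}(ρ^{(α+γ-1)/2} - ρ̄^{(α+γ-1)/2})
    + (2γ/(α(α+γ-1)))[(ρ̄^{(α+γ-1)/2})_x ρ̄^{(γ-α-1)/2}]_x (ρ^α - ρ̄^α). -/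
theorem stmt_16 (γ α : ℝ) (hγ : 1 < γ) (hα : 0 < α)
    (ρ ρb : ℝ → ℝ) (hρ : ContDiff ℝ (⊤ : ℕ∞) ρ) (hρb : ContDiff ℝ (⊤ : ℕ∞) ρb)
    (hρpos : ∀ x, 0 < ρ x) (hρbpos : ∀ x, 0 < ρb x) :
    ∀ x : ℝ,
      (ρ x) ^ (α - 2) * deriv ρ x *
          (deriv (fun y => (ρ y) ^ γ) x - (ρ x / ρb x) * deriv (fun y => (ρb y) ^ γ) x)
        =
        (4 * γ / (α + γ - 1) ^ 2) *
            (deriv (fun y => (ρ y) ^ ((α + γ - 1) / 2) - (ρb y) ^ ((α + γ - 1) / 2)) x) ^ 2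
        + deriv (fun y =>
            (8 * γ / (α + γ - 1) ^ 2) * deriv (fun z => (ρb z) ^ ((α + γ - 1) / 2)) y *
                ((ρ y) ^ ((α + γ - 1) / 2) - (ρb y) ^ ((α + γ - 1) / 2))
            - (2 * γ / (α * (α + γ - 1))) * deriv (fun z => (ρb z) ^ ((α + γ - 1) / 2)) y *
                (ρb y) ^ ((γ - α - 1) / 2) * ((ρ y) ^ α - (ρb y) ^ α)) x
        - (8 * γ / (α + γ - 1) ^ 2) *
            deriv (fun y => deriv (fun z => (ρb z) ^ ((α + γ - 1) / 2)) y) x *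
            ((ρ x) ^ ((α + γ - 1) / 2) - (ρb x) ^ ((α + γ - 1) / 2))
        + (2 * γ / (α * (α + γ - 1))) *
            deriv (fun y => deriv (fun z => (ρb z) ^ ((α + γ - 1) / 2)) y *
              (ρb y) ^ ((γ - α - 1) / 2)) x *
            ((ρ x) ^ α - (ρb x) ^ α) := by
  have hdρ : Differentiable ℝ ρ := hρ.differentiable (by simp)
  have hdρb : Differentiable ℝ ρb := hρb.differentiable (by simp)
  have hdρb2 : Differentiable ℝ (deriv ρb) :=
    ((contDiff_infty_iff_deriv.mp (hρb.of_le (by simp))).2).differentiable (by simp)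
  have hpow : ∀ (c y : ℝ), HasDerivAt (fun z => ρ z ^ c) (deriv ρ y * c * ρ y ^ (c - 1)) y :=
    fun c y => ((hdρ y).hasDerivAt).rpow_const (Or.inl (hρpos y).ne')
  have hpowb : ∀ (c y : ℝ), HasDerivAt (fun z => ρb z ^ c) (deriv ρb y * c * ρb y ^ (c - 1)) y :=
    fun c y => ((hdρb y).hasDerivAt).rpow_const (Or.inl (hρbpos y).ne')
  have hQfun : deriv (fun z => ρb z ^ ((α + γ - 1) / 2))
      = fun y => deriv ρb y * ((α + γ - 1) / 2) * ρb y ^ ((α + γ - 1) / 2 - 1) :=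
    funext fun y => (hpowb ((α + γ - 1) / 2) y).deriv
  intro x
  have hr := hρpos x
  have hb := hρbpos x
  have hQx : HasDerivAt (fun y => deriv ρb y * ((α + γ - 1) / 2) * ρb y ^ ((α + γ - 1) / 2 - 1)) _ x :=
    ((hdρb2 x).hasDerivAt.mul_const ((α + γ - 1) / 2)).mul (hpowb ((α + γ - 1) / 2 - 1) x)
  have hPd : HasDerivAt (fun y => ρ y ^ ((α + γ - 1) / 2) - ρb y ^ ((α + γ - 1) / 2)) _ x :=
    (hpow ((α + γ - 1) / 2) x).sub (hpowb ((α + γ - 1) / 2) x)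
  have hTd : HasDerivAt (fun y => ρ y ^ α - ρb y ^ α) _ x :=
    (hpow α x).sub (hpowb α x)
  have hQE : HasDerivAt (fun y => deriv ρb y * ((α + γ - 1) / 2) * ρb y ^ ((α + γ - 1) / 2 - 1)
      * ρb y ^ ((γ - α - 1) / 2)) _ x := hQx.mul (hpowb ((γ - α - 1) / 2) x)
  have hF : HasDerivAt (fun y =>
      8 * γ / (α + γ - 1) ^ 2 * (deriv ρb y * ((α + γ - 1) / 2) * ρb y ^ ((α + γ - 1) / 2 - 1)) *
          (ρ y ^ ((α + γ - 1) / 2) - ρb y ^ ((α + γ - 1) / 2))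
      - 2 * γ / (α * (α + γ - 1)) * (deriv ρb y * ((α + γ - 1) / 2) * ρb y ^ ((α + γ - 1) / 2 - 1)) *
          ρb y ^ ((γ - α - 1) / 2) * (ρ y ^ α - ρb y ^ α)) _ x :=
    (((hQx.const_mul (8 * γ / (α + γ - 1) ^ 2)).mul hPd).sub
      (((hQx.const_mul (2 * γ / (α * (α + γ - 1)))).mul (hpowb ((γ - α - 1) / 2) x)).mul hTd))
  simp only [hQfun]
  rw [(hpow γ x).deriv, (hpowb γ x).deriv, hPd.deriv, hF.deriv, hQx.deriv, hQE.deriv]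
  have hapos : (0:ℝ) < α + γ - 1 := by linarith
  have hX2 : ρ x ^ (γ - 1) = ρ x ^ (α - 2) * ρ x ^ ((γ - α + 1) / 2) * ρ x ^ ((γ - α + 1) / 2) := by
    rw [← Real.rpow_add hr, ← Real.rpow_add hr]; congr 1; ring
  have hX3 : ρ x ^ ((α + γ - 1) / 2 - 1) = ρ x ^ (α - 2) * ρ x ^ ((γ - α + 1) / 2) := by
    rw [← Real.rpow_add hr]; congr 1; ring
  have hX4 : ρ x ^ (α - 1) = ρ x ^ (α - 2) * ρ x := by
    rw [← Real.rpow_add_one hr.ne']; congr 1; ring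
  have hY1 : ρb x ^ (γ - 1)
      = ρb x ^ (α - 1) * ρb x ^ ((γ - α - 1) / 2) * ρb x ^ ((γ - α - 1) / 2) * ρb x := by
    rw [← Real.rpow_add hb, ← Real.rpow_add hb, ← Real.rpow_add_one hb.ne']; congr 1; ring
  have hY2 : ρb x ^ ((α + γ - 1) / 2 - 1) = ρb x ^ (α - 1) * ρb x ^ ((γ - α - 1) / 2) := by
    rw [← Real.rpow_add hb]; congr 1; ring
  simp only [Pi.mul_apply]
  rw [hX2, hX3, hX4, hY1, hY2]
  field_simp
  ring
end

section
/- Let γ > 1 and define, for ρ, ρ̄ > 0, Ψ(ρ,ρ̄) = (1/((γ-1)ρ))(ρ^γ − ρ̄^γ − γρ̄^{γ-1}(ρ − ρ̄)). Suppose smooth positive ρ and smooth u satisfy ρ_t + (ρu)_x = 0, and smooth positive ρ̄ and smooth ū satisfy ρ̄_t + (ρ̄ū)_x = 0. Then (ρΨ(ρ,ρ̄))_t + (ρuΨ(ρ,ρ̄))_x + (u − ū)_x (ρ^γ − ρ̄^γ) + ū_x (ρ^γ − ρ̄^γ − γρ̄^{γ-1}(ρ − ρ̄)) = −(p(ρ̄)_x/ρ̄)(ρ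 − ρ̄)(u − ū), where p(s) = s^γ. -/
set_option maxHeartbeats 1000000


/-- Relative-entropy identity (3.7): with
Ψ(a,b) = (1/((γ-1)a))(a^γ − b^γ − γ b^{γ-1}(a − b)), γ > 1, and smooth
positive ρ, ρ̄ with smooth u, ū satisfying the continuity equations
ρ_t + (ρu)_x = 0 and ρ̄_t + (ρ̄ū)_x = 0, one has pointwise
(ρΨ)_t + (ρuΨ)_x + (u − ū)_x (ρ^γ − ρ̄^γ)
  + ū_x (ρ^γ − ρ̄^γ − γρ̄^{γ-1}(ρ − ρ̄)) = −(p(ρ̄)_x/ρ̄)(ρ − ρ̄)(u − ū). -/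
theorem stmt_18 (γ : ℝ) (hγ : 1 < γ)
    (ρ u ρb ub : ℝ → ℝ → ℝ)
    (hρ : ContDiff ℝ (⊤ : ℕ∞) (fun p : ℝ × ℝ => ρ p.1 p.2))
    (hu : ContDiff ℝ (⊤ : ℕ∞) (fun p : ℝ × ℝ => u p.1 p.2))
    (hρb : ContDiff ℝ (⊤ : ℕ∞) (fun p : ℝ × ℝ => ρb p.1 p.2))
    (hub : ContDiff ℝ (⊤ : ℕ∞) (fun p : ℝ × ℝ => ub p.1 p.2))
    (hρpos : ∀ t x, 0 < ρ t x) (hρbpos : ∀ t x, 0 < ρb t x)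
    (hmass : ∀ t x, deriv (fun s => ρ s x) t + deriv (fun y => ρ t y * u t y) x = 0)
    (hmassb : ∀ t x, deriv (fun s => ρb s x) t + deriv (fun y => ρb t y * ub t y) x = 0)
    (Ψ : ℝ → ℝ → ℝ)
    (hΨ : ∀ a b : ℝ, Ψ a b =
      (1 / ((γ - 1) * a)) * (a ^ γ - b ^ γ - γ * b ^ (γ - 1) * (a - b))) :
    ∀ t x : ℝ,
      deriv (fun s => ρ s x * Ψ (ρ s x) (ρb s x)) t
        + deriv (fun y => ρ t y * u t y * Ψ (ρ t y) (ρb t y)) x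
        + deriv (fun y => u t y - ub t y) x * ((ρ t x) ^ γ - (ρb t x) ^ γ)
        + deriv (fun y => ub t y) x *
            ((ρ t x) ^ γ - (ρb t x) ^ γ - γ * (ρb t x) ^ (γ - 1) * (ρ t x - ρb t x))
      = -(deriv (fun y => (ρb t y) ^ γ) x / ρb t x) * (ρ t x - ρb t x) *
          (u t x - ub t x) := by
  intro t x
  have hg0 : γ - 1 ≠ 0 := sub_ne_zero.mpr (ne_of_gt hγ)
  have hr0 : ∀ s y, ρ s y ≠ 0 := fun s y => (hρpos s y).ne'
  have hb0 : ∀ s y, ρb s y ≠ 0 := fun s y => (hρbpos s y).ne'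
  have Dρ := hρ.differentiable (by simp)
  have Du := hu.differentiable (by simp)
  have Dρb := hρb.differentiable (by simp)
  have Dub := hub.differentiable (by simp)
  -- slice differentiability
  have sρt : Differentiable ℝ (fun s => ρ s x) :=
    Dρ.comp (differentiable_id.prodMk (differentiable_const x))
  have sρbt : Differentiable ℝ (fun s => ρb s x) :=
    Dρb.comp (differentiable_id.prodMk (differentiable_const x))
  have sρx : Differentiable ℝ (fun y => ρ t y) :=
    Dρ.comp ((differentiable_const t).prodMk differentiable_id)
  have sρbx : Differentiable ℝ (fun y => ρb t y) :=
    Dρb.comp ((differentiable_const t).prodMk differentiable_id)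
  have sux : Differentiable ℝ (fun y => u t y) :=
    Du.comp ((differentiable_const t).prodMk differentiable_id)
  have subx : Differentiable ℝ (fun y => ub t y) :=
    Dub.comp ((differentiable_const t).prodMk differentiable_id)
  -- basic derivatives
  set rt := deriv (fun s => ρ s x) t with hrt
  set bt := deriv (fun s => ρb s x) t with hbt
  set rx := deriv (fun y => ρ t y) x with hrx
  set bx := deriv (fun y => ρb t y) x with hbx
  set ux := deriv (fun y => u t y) x with hux
  set vx := deriv (fun y => ub t y) x with hvx
  have Hrt : HasDerivAt (fun s => ρ s x) rt t := (sρt t).hasDerivAt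
  have Hbt : HasDerivAt (fun s => ρb s x) bt t := (sρbt t).hasDerivAt
  have Hrx : HasDerivAt (fun y => ρ t y) rx x := (sρx x).hasDerivAt
  have Hbx : HasDerivAt (fun y => ρb t y) bx x := (sρbx x).hasDerivAt
  have Hux : HasDerivAt (fun y => u t y) ux x := (sux x).hasDerivAt
  have Hvx : HasDerivAt (fun y => ub t y) vx x := (subx x).hasDerivAt
  -- mass equations in pointwise form
  have hm1 : rt = -(rx * u t x + ρ t x * ux) := by
    have := hmass t x
    rw [(Hrx.fun_mul Hux).deriv] at this
    linarith
  have hm2 : bt = -(bx * ub t x + ρb t x * vx) := by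
    have := hmassb t x
    rw [(Hbx.fun_mul Hvx).deriv] at this
    linarith
  -- rpow derivatives in t
  have Hrγt : HasDerivAt (fun s => (ρ s x) ^ γ) (rt * γ * ρ t x ^ (γ - 1)) t :=
    Hrt.rpow_const (Or.inl (hr0 t x))
  have Hbγt : HasDerivAt (fun s => (ρb s x) ^ γ) (bt * γ * ρb t x ^ (γ - 1)) t :=
    Hbt.rpow_const (Or.inl (hb0 t x))
  have Hbγ1t : HasDerivAt (fun s => (ρb s x) ^ (γ - 1)) (bt * (γ - 1) * ρb t x ^ (γ - 1 - 1)) t :=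
    Hbt.rpow_const (Or.inl (hb0 t x))
  have Hrγx : HasDerivAt (fun y => (ρ t y) ^ γ) (rx * γ * ρ t x ^ (γ - 1)) x :=
    Hrx.rpow_const (Or.inl (hr0 t x))
  have Hbγx : HasDerivAt (fun y => (ρb t y) ^ γ) (bx * γ * ρb t x ^ (γ - 1)) x :=
    Hbx.rpow_const (Or.inl (hb0 t x))
  have Hbγ1x : HasDerivAt (fun y => (ρb t y) ^ (γ - 1)) (bx * (γ - 1) * ρb t x ^ (γ - 1 - 1)) x :=
    Hbx.rpow_const (Or.inl (hb0 t x))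
  -- term A
  have funA : (fun s => ρ s x * Ψ (ρ s x) (ρb s x)) =
      fun s => (γ - 1)⁻¹ *
        ((ρ s x) ^ γ - (ρb s x) ^ γ - γ * (ρb s x) ^ (γ - 1) * (ρ s x - ρb s x)) := by
    funext s
    rw [hΨ]
    field_simp [hr0 s x, hg0]
  have HA : HasDerivAt (fun s => ρ s x * Ψ (ρ s x) (ρb s x))
      ((γ - 1)⁻¹ * (rt * γ * ρ t x ^ (γ - 1) - bt * γ * ρb t x ^ (γ - 1) -
        (γ * (bt * (γ - 1) * ρb t x ^ (γ - 1 - 1)) * (ρ t x - ρb t x) +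
         γ * ρb t x ^ (γ - 1) * (rt - bt)))) t := by
    rw [funA]
    exact (((Hrγt.sub Hbγt).sub ((Hbγ1t.const_mul γ).mul (Hrt.sub Hbt))).const_mul _)
  -- term B
  have funB : (fun y => ρ t y * u t y * Ψ (ρ t y) (ρb t y)) =
      fun y => u t y * ((γ - 1)⁻¹ *
        ((ρ t y) ^ γ - (ρb t y) ^ γ - γ * (ρb t y) ^ (γ - 1) * (ρ t y - ρb t y))) := by
    funext y
    rw [hΨ]
    field_simp [hr0 t y, hg0]
  have HB : HasDerivAt (fun y => ρ t y * u t y * Ψ (ρ t y) (ρb t y))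
      (ux * ((γ - 1)⁻¹ *
        ((ρ t x) ^ γ - (ρb t x) ^ γ - γ * (ρb t x) ^ (γ - 1) * (ρ t x - ρb t x))) +
       u t x * ((γ - 1)⁻¹ * (rx * γ * ρ t x ^ (γ - 1) - bx * γ * ρb t x ^ (γ - 1) -
        (γ * (bx * (γ - 1) * ρb t x ^ (γ - 1 - 1)) * (ρ t x - ρb t x) +
         γ * ρb t x ^ (γ - 1) * (rx - bx))))) x := by
    rw [funB]
    exact Hux.mul (((Hrγx.sub Hbγx).sub ((Hbγ1x.const_mul γ).mul (Hrx.sub Hbx))).const_mul _)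
  -- rewrite goal
  rw [HA.deriv, HB.deriv, (Hux.fun_sub Hvx).deriv, Hbγx.deriv]
  -- rpow simplifications (multiplicative form)
  have f1 : ρ t x ^ γ = ρ t x ^ (γ - 1) * ρ t x := by
    rw [← Real.rpow_add_one (hr0 t x) (γ - 1), sub_add_cancel]
  have f2 : ρb t x ^ γ = ρb t x ^ (γ - 1) * ρb t x := by
    rw [← Real.rpow_add_one (hb0 t x) (γ - 1), sub_add_cancel]
  have f3 : ρb t x ^ (γ - 1) = ρb t x ^ (γ - 1 - 1) * ρb t x := by
    rw [← Real.rpow_add_one (hb0 t x) (γ - 1 - 1), sub_add_cancel]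
  rw [hm1, hm2, f1, f2, f3]
  field_simp [hb0 t x, hg0]
  ring
end

section
/- Let 0 < θ < 1/2 < α and ε > 0, and for ρ > 0 define φ(ρ) = ρ^{α-1}/(α-1) + ε ρ^{θ-1}/(θ-1) if α ≠ 1 (and φ(ρ) = ln ρ + ε ρ^{θ-1}/(θ-1) if α = 1). If smooth positive ρ and smooth u satisfy ρ_t + (ρu)_x = 0 on ℝ × (0,T), then ((ρ^{α-1} + ε ρ^{θ-1}) ρ u_x)_x = −ρ (φ(ρ))_{xt} − ρ u (φ(ρ))_{xx} pointwise. -/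
private lemma pdx_smooth {f : ℝ → ℝ → ℝ} (hf : ContDiff ℝ (⊤ : ℕ∞) fun p : ℝ × ℝ => f p.1 p.2) :
    ContDiff ℝ (⊤ : ℕ∞) fun p : ℝ × ℝ => deriv (fun y => f p.1 y) p.2 := by
  have h : ContDiff ℝ (⊤ : ℕ∞) (Function.uncurry fun (p : ℝ × ℝ) (y : ℝ) => f p.1 y) :=
    hf.comp (((contDiff_fst.comp contDiff_fst)).prodMk contDiff_snd)
  have h2 := ContDiff.fderiv_apply (f := fun (p : ℝ × ℝ) (y : ℝ) => f p.1 y)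
    (g := fun p : ℝ × ℝ => p.2) (k := fun _ => (1:ℝ)) (n := (⊤ : ℕ∞)) (m := (⊤ : ℕ∞)) h contDiff_snd contDiff_const (by simp)
  simpa [fderiv_apply_one_eq_deriv] using h2

private lemma pdt_smooth {f : ℝ → ℝ → ℝ} (hf : ContDiff ℝ (⊤ : ℕ∞) fun p : ℝ × ℝ => f p.1 p.2) :
    ContDiff ℝ (⊤ : ℕ∞) fun p : ℝ × ℝ => deriv (fun s => f s p.2) p.1 := by
  have h : ContDiff ℝ (⊤ : ℕ∞) (Function.uncurry fun (p : ℝ × ℝ) (s : ℝ) => f s p.2) :=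
    hf.comp (contDiff_snd.prodMk ((contDiff_snd.comp contDiff_fst)))
  have h2 := ContDiff.fderiv_apply (f := fun (p : ℝ × ℝ) (s : ℝ) => f s p.2)
    (g := fun p : ℝ × ℝ => p.1) (k := fun _ => (1:ℝ)) (n := (⊤ : ℕ∞)) (m := (⊤ : ℕ∞)) h contDiff_fst contDiff_const (by simp)
  simpa [fderiv_apply_one_eq_deriv] using h2

private lemma sliceX_hasDerivAt {f : ℝ → ℝ → ℝ}
    (hf : ContDiff ℝ (⊤ : ℕ∞) fun p : ℝ × ℝ => f p.1 p.2) (t x : ℝ) :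
    HasDerivAt (fun y => f t y) (deriv (fun y => f t y) x) x := by
  have h : DifferentiableAt ℝ (fun y => f t y) x :=
    (hf.differentiable (by simp) (t, x)).comp x
      ((differentiableAt_const t).prodMk differentiableAt_id)
  exact h.hasDerivAt

private lemma sliceT_hasDerivAt {f : ℝ → ℝ → ℝ}
    (hf : ContDiff ℝ (⊤ : ℕ∞) fun p : ℝ × ℝ => f p.1 p.2) (t x : ℝ) :
    HasDerivAt (fun s => f s x) (deriv (fun s => f s x) t) t := by
  have h : DifferentiableAt ℝ (fun s => f s x) t :=
    by have h0 := (hf.differentiable (by simp) (t, x)).comp t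
        ((differentiableAt_id (𝕜 := ℝ) (x := t)).prodMk (differentiableAt_const x)); exact h0
  exact h.hasDerivAt

private lemma clairaut {f : ℝ → ℝ → ℝ}
    (hf : ContDiff ℝ (⊤ : ℕ∞) fun p : ℝ × ℝ => f p.1 p.2) (t x : ℝ) :
    deriv (fun s => deriv (fun y => f s y) x) t
      = deriv (fun y => deriv (fun s => f s y) t) x := by
  set F : ℝ × ℝ → ℝ := fun p => f p.1 p.2 with hF
  have hdF : Differentiable ℝ F := hf.differentiable (by simp)
  have hF' : ContDiff ℝ (⊤ : ℕ∞) (fderiv ℝ F) := hf.fderiv_right (by simp)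
  have hdF' : Differentiable ℝ (fderiv ℝ F) := hF'.differentiable (by simp)
  have hx : ∀ s y : ℝ, deriv (fun y' => f s y') y = fderiv ℝ F (s, y) (0, 1) := by
    intro s y
    have h1 : HasDerivAt (fun y' => F (s, y')) (fderiv ℝ F (s, y) ((0:ℝ), (1:ℝ))) y :=
      (hdF (s, y)).hasFDerivAt.comp_hasDerivAt y
        ((hasDerivAt_const y s).prodMk (hasDerivAt_id y))
    exact h1.deriv
  have ht : ∀ s y : ℝ, deriv (fun s' => f s' y) s = fderiv ℝ F (s, y) (1, 0) := by
    intro s y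
    have h1 : HasDerivAt (fun s' => F (s', y)) (fderiv ℝ F (s, y) ((1:ℝ), (0:ℝ))) s :=
      by have h0 := (hdF (s, y)).hasFDerivAt.comp_hasDerivAt s
          ((hasDerivAt_id' s).prodMk (hasDerivAt_const s y)); exact h0
    exact h1.deriv
  have e1 : (fun s => deriv (fun y' => f s y') x) = fun s => fderiv ℝ F (s, x) (0, 1) :=
    funext fun s => hx s x
  have e2 : (fun y => deriv (fun s => f s y) t) = fun y => fderiv ℝ F (t, y) (1, 0) :=
    funext fun y => ht t y
  rw [e1, e2]
  have hL : HasDerivAt (fun s => fderiv ℝ F (s, x) ((0:ℝ),(1:ℝ)))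
      ((fderiv ℝ (fderiv ℝ F) (t, x) ((1:ℝ),(0:ℝ))) ((0:ℝ),(1:ℝ))) t := by
    have h1 : HasDerivAt (fun s => fderiv ℝ F (s, x))
        (fderiv ℝ (fderiv ℝ F) (t, x) ((1:ℝ),(0:ℝ))) t :=
      (hdF' (t, x)).hasFDerivAt.comp_hasDerivAt t
        ((hasDerivAt_id t).prodMk (hasDerivAt_const t x))
    have h2 := h1.clm_apply (hasDerivAt_const t ((0:ℝ),(1:ℝ)))
    simpa using h2
  have hR : HasDerivAt (fun y => fderiv ℝ F (t, y) ((1:ℝ),(0:ℝ)))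
      ((fderiv ℝ (fderiv ℝ F) (t, x) ((0:ℝ),(1:ℝ))) ((1:ℝ),(0:ℝ))) x := by
    have h1 : HasDerivAt (fun y => fderiv ℝ F (t, y))
        (fderiv ℝ (fderiv ℝ F) (t, x) ((0:ℝ),(1:ℝ))) x :=
      (hdF' (t, x)).hasFDerivAt.comp_hasDerivAt x
        ((hasDerivAt_const x t).prodMk (hasDerivAt_id x))
    have h2 := h1.clm_apply (hasDerivAt_const x ((1:ℝ),(0:ℝ)))
    simpa using h2
  rw [hL.deriv, hR.deriv]
  exact second_derivative_symmetric (fun y => (hdF y).hasFDerivAt)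
    ((hdF' (t, x)).hasFDerivAt) _ _


private lemma hasDerivAt_phi {α θ ε : ℝ} (hθ : θ ≠ 1) (φ : ℝ → ℝ)
    (hφ : ∀ r : ℝ, φ r = if α = 1 then Real.log r + ε * r ^ (θ - 1) / (θ - 1)
      else r ^ (α - 1) / (α - 1) + ε * r ^ (θ - 1) / (θ - 1))
    {a : ℝ} (ha : 0 < a) :
    HasDerivAt φ (a ^ (α - 2) + ε * a ^ (θ - 2)) a := by
  have hφf : φ = fun r => if α = 1 then Real.log r + ε * r ^ (θ - 1) / (θ - 1)
      else r ^ (α - 1) / (α - 1) + ε * r ^ (θ - 1) / (θ - 1) := funext hφ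
  have hθ0 : θ - 1 ≠ 0 := sub_ne_zero.mpr hθ
  have hb : HasDerivAt (fun r : ℝ => ε * r ^ (θ - 1) / (θ - 1)) (ε * a ^ (θ - 2)) a := by
    have h1 : HasDerivAt (fun r : ℝ => r ^ (θ - 1)) ((θ - 1) * a ^ (θ - 2)) a := by
      rw [show θ - 2 = θ - 1 - 1 by ring]
      exact Real.hasDerivAt_rpow_const (Or.inl ha.ne')
    have h2 := (h1.const_mul ε).div_const (θ - 1)
    refine h2.congr_deriv ?_
    rw [div_eq_iff hθ0]
    ring
  rw [hφf]
  by_cases hA : α = 1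
  · have h1 : HasDerivAt (fun r : ℝ => Real.log r + ε * r ^ (θ - 1) / (θ - 1))
        (a⁻¹ + ε * a ^ (θ - 2)) a := (Real.hasDerivAt_log ha.ne').add hb
    have h2 : a ^ (α - 2) = a⁻¹ := by
      rw [hA, show (1:ℝ) - 2 = -1 by norm_num, Real.rpow_neg_one]
    simp only [if_pos hA]
    rw [h2]
    exact h1
  · have hα0 : α - 1 ≠ 0 := sub_ne_zero.mpr hA
    have h1 : HasDerivAt (fun r : ℝ => r ^ (α - 1) / (α - 1)) (a ^ (α - 2)) a := by
      have h2 : HasDerivAt (fun r : ℝ => r ^ (α - 1)) ((α - 1) * a ^ (α - 2)) a := by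
        rw [show α - 2 = α - 1 - 1 by ring]
        exact Real.hasDerivAt_rpow_const (Or.inl ha.ne')
      have h3 := h2.div_const (α - 1)
      refine h3.congr_deriv ?_
      rw [div_eq_iff hα0]
      ring
    simp only [if_neg hA]
    exact h1.add hb

/-- Identity (3.11): let 0 < θ < 1/2 < α, ε > 0, and
φ(r) = r^{α-1}/(α-1) + ε r^{θ-1}/(θ-1) if α ≠ 1, φ(r) = ln r + ε r^{θ-1}/(θ-1)
if α = 1. If smooth positive ρ and smooth u satisfy ρ_t + (ρu)_x = 0 on
ℝ × (0,T), then
((ρ^{α-1} + ε ρ^{θ-1}) ρ u_x)_x = −ρ (φ(ρ))_{xt} − ρ u (φ(ρ))_{xx}. -/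
theorem stmt_19 (α θ ε T : ℝ) (hθ1 : 0 < θ) (hθ2 : θ < 1 / 2) (hα : 1 / 2 < α)
    (hε : 0 < ε) (hT : 0 < T)
    (ρ u : ℝ → ℝ → ℝ)
    (hρ : ContDiff ℝ (⊤ : ℕ∞) (fun p : ℝ × ℝ => ρ p.1 p.2))
    (hu : ContDiff ℝ (⊤ : ℕ∞) (fun p : ℝ × ℝ => u p.1 p.2))
    (hρpos : ∀ t x, 0 < ρ t x)
    (hmass : ∀ t ∈ Set.Ioo 0 T, ∀ x : ℝ,
      deriv (fun s => ρ s x) t + deriv (fun y => ρ t y * u t y) x = 0)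
    (φ : ℝ → ℝ)
    (hφ : ∀ r : ℝ, φ r =
      if α = 1 then Real.log r + ε * r ^ (θ - 1) / (θ - 1)
      else r ^ (α - 1) / (α - 1) + ε * r ^ (θ - 1) / (θ - 1)) :
    ∀ t ∈ Set.Ioo 0 T, ∀ x : ℝ,
      deriv (fun y =>
          ((ρ t y) ^ (α - 1) + ε * (ρ t y) ^ (θ - 1)) * ρ t y * deriv (fun z => u t z) y) x
        = -(ρ t x) * deriv (fun s => deriv (fun y => φ (ρ s y)) x) t
          - ρ t x * u t x * deriv (fun y => deriv (fun z => φ (ρ t z)) y) x := by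
  intro t ht x
  have hθ1' : θ ≠ 1 := by linarith
  have hr : (0:ℝ) < ρ t x := hρpos t x
  have hrne : ρ t x ≠ 0 := hr.ne'
  have hP : ContDiff ℝ (⊤ : ℕ∞) fun p : ℝ × ℝ => deriv (fun y => ρ p.1 y) p.2 := pdx_smooth hρ
  have hUx : ContDiff ℝ (⊤ : ℕ∞) fun p : ℝ × ℝ => deriv (fun y => u p.1 y) p.2 := pdx_smooth hu
  -- slice derivatives
  have hroy : HasDerivAt (fun y => ρ t y) (deriv (fun y => ρ t y) x) x :=
    sliceX_hasDerivAt hρ t x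
  have huy : HasDerivAt (fun y => u t y) (deriv (fun y => u t y) x) x :=
    sliceX_hasDerivAt hu t x
  have hPy : HasDerivAt (fun y => deriv (fun z => ρ t z) y)
      (deriv (fun y => deriv (fun z => ρ t z) y) x) x :=
    sliceX_hasDerivAt (f := fun s y => deriv (fun z => ρ s z) y) hP t x
  have hUy : HasDerivAt (fun y => deriv (fun z => u t z) y)
      (deriv (fun y => deriv (fun z => u t z) y) x) x :=
    sliceX_hasDerivAt (f := fun s y => deriv (fun z => u s z) y) hUx t x
  have hrot : HasDerivAt (fun s => ρ s x) (deriv (fun s => ρ s x) t) t :=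
    sliceT_hasDerivAt hρ t x
  have hPt : HasDerivAt (fun s => deriv (fun z => ρ s z) x)
      (deriv (fun s => deriv (fun z => ρ s z) x) t) t :=
    sliceT_hasDerivAt (f := fun s y => deriv (fun z => ρ s z) y) hP t x
  -- rpow compositions in the x direction
  have hA1 : HasDerivAt (fun y => ρ t y ^ (α - 1))
      ((α - 1) * ρ t x ^ (α - 2) * deriv (fun y => ρ t y) x) x := by
    have h := (Real.hasDerivAt_rpow_const (x := ρ t x) (p := α - 1) (Or.inl hrne)).comp x hroy
    rw [show α - 1 - 1 = α - 2 by ring] at h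
    exact h
  have hB1 : HasDerivAt (fun y => ρ t y ^ (θ - 1))
      ((θ - 1) * ρ t x ^ (θ - 2) * deriv (fun y => ρ t y) x) x := by
    have h := (Real.hasDerivAt_rpow_const (x := ρ t x) (p := θ - 1) (Or.inl hrne)).comp x hroy
    rw [show θ - 1 - 1 = θ - 2 by ring] at h
    exact h
  have hA2 : HasDerivAt (fun y => ρ t y ^ (α - 2))
      ((α - 2) * ρ t x ^ (α - 3) * deriv (fun y => ρ t y) x) x := by
    have h := (Real.hasDerivAt_rpow_const (x := ρ t x) (p := α - 2) (Or.inl hrne)).comp x hroy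
    rw [show α - 2 - 1 = α - 3 by ring] at h
    exact h
  have hB2 : HasDerivAt (fun y => ρ t y ^ (θ - 2))
      ((θ - 2) * ρ t x ^ (θ - 3) * deriv (fun y => ρ t y) x) x := by
    have h := (Real.hasDerivAt_rpow_const (x := ρ t x) (p := θ - 2) (Or.inl hrne)).comp x hroy
    rw [show θ - 2 - 1 = θ - 3 by ring] at h
    exact h
  -- rpow compositions in the t direction
  have hA2t : HasDerivAt (fun s => ρ s x ^ (α - 2))
      ((α - 2) * ρ t x ^ (α - 3) * deriv (fun s => ρ s x) t) t := by
    have h := (Real.hasDerivAt_rpow_const (x := ρ t x) (p := α - 2) (Or.inl hrne)).comp t hrot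
    rw [show α - 2 - 1 = α - 3 by ring] at h
    exact h
  have hB2t : HasDerivAt (fun s => ρ s x ^ (θ - 2))
      ((θ - 2) * ρ t x ^ (θ - 3) * deriv (fun s => ρ s x) t) t := by
    have h := (Real.hasDerivAt_rpow_const (x := ρ t x) (p := θ - 2) (Or.inl hrne)).comp t hrot
    rw [show θ - 2 - 1 = θ - 3 by ring] at h
    exact h
  -- the LHS derivative
  have hL : deriv (fun y =>
        ((ρ t y) ^ (α - 1) + ε * (ρ t y) ^ (θ - 1)) * ρ t y * deriv (fun z => u t z) y) x
      = (((α - 1) * ρ t x ^ (α - 2) * deriv (fun y => ρ t y) x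
            + ε * ((θ - 1) * ρ t x ^ (θ - 2) * deriv (fun y => ρ t y) x)) * ρ t x
          + (ρ t x ^ (α - 1) + ε * ρ t x ^ (θ - 1)) * deriv (fun y => ρ t y) x)
            * deriv (fun z => u t z) x
        + (ρ t x ^ (α - 1) + ε * ρ t x ^ (θ - 1)) * ρ t x
            * deriv (fun y => deriv (fun z => u t z) y) x :=
    (((hA1.add (hB1.const_mul ε)).mul hroy).mul hUy).deriv
  -- first x-derivative of φ ∘ ρ
  have hphix : ∀ s y : ℝ, deriv (fun z => φ (ρ s z)) y
      = (ρ s y ^ (α - 2) + ε * ρ s y ^ (θ - 2)) * deriv (fun z => ρ s z) y := by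
    intro s y
    exact ((hasDerivAt_phi hθ1' φ hφ (hρpos s y)).comp y (sliceX_hasDerivAt hρ s y)).deriv
  -- second x-derivative of φ ∘ ρ
  have hN : deriv (fun y => deriv (fun z => φ (ρ t z)) y) x
      = ((α - 2) * ρ t x ^ (α - 3) * deriv (fun y => ρ t y) x
            + ε * ((θ - 2) * ρ t x ^ (θ - 3) * deriv (fun y => ρ t y) x))
          * deriv (fun z => ρ t z) x
        + (ρ t x ^ (α - 2) + ε * ρ t x ^ (θ - 2))
            * deriv (fun y => deriv (fun z => ρ t z) y) x := by
    have e : (fun y => deriv (fun z => φ (ρ t z)) y)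
        = fun y => (ρ t y ^ (α - 2) + ε * ρ t y ^ (θ - 2)) * deriv (fun z => ρ t z) y :=
      funext (hphix t)
    rw [e]
    exact ((hA2.add (hB2.const_mul ε)).mul hPy).deriv
  -- mixed derivative of φ ∘ ρ
  have hM : deriv (fun s => deriv (fun y => φ (ρ s y)) x) t
      = ((α - 2) * ρ t x ^ (α - 3) * deriv (fun s => ρ s x) t
            + ε * ((θ - 2) * ρ t x ^ (θ - 3) * deriv (fun s => ρ s x) t))
          * deriv (fun z => ρ t z) x
        + (ρ t x ^ (α - 2) + ε * ρ t x ^ (θ - 2))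
            * deriv (fun s => deriv (fun z => ρ s z) x) t := by
    have e : (fun s => deriv (fun y => φ (ρ s y)) x)
        = fun s => (ρ s x ^ (α - 2) + ε * ρ s x ^ (θ - 2)) * deriv (fun z => ρ s z) x :=
      funext fun s => hphix s x
    rw [e]
    exact ((hA2t.add (hB2t.const_mul ε)).mul hPt).deriv
  -- value of ρ_t
  have hrt : deriv (fun s => ρ s x) t
      = -(deriv (fun y => ρ t y) x * u t x + ρ t x * deriv (fun y => u t y) x) := by
    have h0 := hmass t ht x
    have h1 : deriv (fun y => ρ t y * u t y) x
        = deriv (fun y => ρ t y) x * u t x + ρ t x * deriv (fun y => u t y) x :=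
      (hroy.mul huy).deriv
    rw [h1] at h0
    linarith
  -- value of ρ_tx via Clairaut
  have hrtx : deriv (fun s => deriv (fun z => ρ s z) x) t
      = -((deriv (fun y => deriv (fun z => ρ t z) y) x * u t x
            + deriv (fun y => ρ t y) x * deriv (fun y => u t y) x)
          + (deriv (fun y => ρ t y) x * deriv (fun y => u t y) x
            + ρ t x * deriv (fun y => deriv (fun z => u t z) y) x)) := by
    rw [clairaut hρ t x]
    have e : (fun y => deriv (fun s => ρ s y) t)
        = fun y => -(deriv (fun z => ρ t z) y * u t y
            + ρ t y * deriv (fun z => u t z) y) := by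
      funext y
      have h0 := hmass t ht y
      have h1 : deriv (fun y' => ρ t y' * u t y') y
          = deriv (fun z => ρ t z) y * u t y + ρ t y * deriv (fun z => u t z) y :=
        ((sliceX_hasDerivAt hρ t y).mul (sliceX_hasDerivAt hu t y)).deriv
      rw [h1] at h0
      linarith
    rw [e]
    exact (((hPy.mul huy).add (hroy.mul hUy)).neg).deriv
  rw [hL, hM, hN, hrt, hrtx]
  rw [show (α - 1 : ℝ) = α - 3 + 1 + 1 by ring, show (θ - 1 : ℝ) = θ - 3 + 1 + 1 by ring,
      show (α - 2 : ℝ) = α - 3 + 1 by ring, show (θ - 2 : ℝ) = θ - 3 + 1 by ring]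
  simp only [Real.rpow_add_one hrne]
  ring
end
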